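/- arXiv:1202.2898 — 4 statements merged into one kernel-verified Lean document; each statement's English description precedes it below -/
import Mathlib

section
/- For covectors r₁,...,r_{n+1} in a module over a commutative ring and a scalar z, the wedge product identity ⋀_{j=1}^{n} (z·r_j − r_{j+1}) = ∑_{j=1}^{n+1} (−1)^{n+1−j} z^{j−1} · r₁ ∧ r₂ ∧ ⋯ ∧ \hat r_j ∧ ⋯ ∧ r_{n+1} holds, where \hat r_j means r_j is omitted. -/
private lemma aux13 (R : Type*) [CommRing R] (M : Type*) [AddCommGroup M] [Module R M]
    (n : ℕ) (r' : Fin (n + 1) → M) (m : Fin n) :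
    ExteriorAlgebra.ι R (r' 0) *
      (List.ofFn fun i : Fin n => ExteriorAlgebra.ι R (r' (m.succ.succAbove i))).prod = 0 := by
  have hm := m.pos
  obtain ⟨n, rfl⟩ : ∃ n', n = n' + 1 := ⟨n - 1, by omega⟩
  rw [List.ofFn_succ, List.prod_cons, Fin.succ_succAbove_zero, ← mul_assoc,
    ExteriorAlgebra.ι_sq_zero, zero_mul]


/-- Wedge product identity: for covectors `r₁, …, r_{n+1}` in a module over a commutative
ring and a scalar `z`,
`⋀_{j=1}^{n} (z·r_j − r_{j+1}) = ∑_{j=1}^{n+1} (−1)^{n+1−j} z^{j−1} r₁∧⋯∧r̂_j∧⋯∧r_{n+1}`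
(here stated with `0`-based indexing, the wedge product taken inside the exterior
algebra, and `r̂_j` meaning that `r_j` is omitted). -/
theorem stmt_13 (R : Type*) [CommRing R] (M : Type*) [AddCommGroup M] [Module R M]
    (n : ℕ) (r : Fin (n + 1) → M) (z : R) :
    (List.ofFn fun i : Fin n =>
      ExteriorAlgebra.ι R (z • r i.castSucc - r i.succ)).prod =
    ∑ j : Fin (n + 1), ((-1 : R) ^ (n - (j : ℕ)) * z ^ (j : ℕ)) •
      (List.ofFn fun i : Fin n => ExteriorAlgebra.ι R (r (j.succAbove i))).prod := by
  induction n with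
  | zero => simp
  | succ n ih =>
    rw [List.ofFn_succ, List.prod_cons]
    have h1 := ih (fun j => r j.succ)
    simp only [Fin.succ_castSucc] at h1
    rw [h1, map_sub, map_smul, sub_mul, smul_mul_assoc, Finset.mul_sum, Finset.mul_sum]
    simp only [mul_smul_comm]
    have hA : z • ∑ j : Fin (n+1), ((-1:R)^(n - (j:ℕ)) * z ^ (j:ℕ)) •
          (ExteriorAlgebra.ι R (r (Fin.castSucc 0)) *
            (List.ofFn fun i : Fin n => ExteriorAlgebra.ι R (r ((j.succAbove i)).succ)).prod)
        = ∑ x : Fin (n+1), ((-1:R)^(n + 1 - (x.succ:ℕ)) * z ^ ((x.succ:ℕ))) •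
          (List.ofFn fun i : Fin (n+1) => ExteriorAlgebra.ι R (r (x.succ.succAbove i))).prod := by
      rw [Finset.smul_sum]
      refine Finset.sum_congr rfl fun x _ => ?_
      rw [List.ofFn_succ, List.prod_cons]
      simp only [Fin.succ_succAbove_zero, Fin.succ_succAbove_succ, Fin.castSucc_zero, smul_smul]
      congr 1
      simp only [Fin.val_succ, Nat.succ_sub_succ, pow_succ]
      ring
    have hB : ∑ j : Fin (n+1), ((-1:R)^(n - (j:ℕ)) * z ^ (j:ℕ)) •
          (ExteriorAlgebra.ι R (r (Fin.succ 0)) *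
            (List.ofFn fun i : Fin n => ExteriorAlgebra.ι R (r ((j.succAbove i)).succ)).prod)
        = -(((-1:R)^(n + 1 - ((0 : Fin (n+2)):ℕ)) * z ^ (((0 : Fin (n+2)):ℕ))) •
            (List.ofFn fun i : Fin (n+1) =>
              ExteriorAlgebra.ι R (r ((0 : Fin (n+2)).succAbove i))).prod) := by
      rw [Fin.sum_univ_succ]
      have hz : ∀ m : Fin n, ((-1:R)^(n - ((m.succ : Fin (n+1)):ℕ)) * z ^ (((m.succ : Fin (n+1)):ℕ))) •
          (ExteriorAlgebra.ι R (r (Fin.succ 0)) *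
            (List.ofFn fun i : Fin n =>
              ExteriorAlgebra.ι R (r ((m.succ.succAbove i)).succ)).prod) = 0 := by
        intro m
        have h0 := aux13 R M n (fun j => r j.succ) m
        rw [h0, smul_zero]
      rw [Finset.sum_congr rfl fun m _ => hz m, Finset.sum_const_zero, add_zero]
      simp only [Fin.succAbove_zero, Fin.val_zero, Nat.sub_zero, pow_zero, mul_one]
      rw [List.ofFn_succ, List.prod_cons]
      try simp only [Fin.succAbove_zero, Function.comp]
      rw [← neg_smul]
      congr 1
      simp [pow_succ]
    rw [hA, hB, sub_neg_eq_add, Fin.sum_univ_succ (n := n + 1)]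
    exact add_comm _ _
end

section
/- For covectors r₁, r₂, r₃, ... in a module where the infinite sums s_j := ∑_{i=0}^∞ r_{j+i} z^{-i} converge (e.g. finitely supported or in a suitable topological module), the identity ⋀_{j=1}^{n} s_j = r₁ ∧ r₂ ∧ ⋯ ∧ r_{n-1} ∧ s_n holds; equivalently, in ⋀_{j=1}^n (∑_{i=0}^∞ r_{j+i} z^{-i}) all but the leading term of each of the first n−1 factors cancels. -/
/-!
Writing `s_j` for the tail starting at `r_j`, one has `s_j = r_j + ζ • s_{j+1}`, and since
`ι s_{j+1} * ι s_{j+1} = 0` this gives `ι s_j * ι s_{j+1} = ι r_j * ι s_{j+1}`. Working from the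
right end of the product, each factor but the last is thereby replaced by its leading term.
-/

open Finset

theorem Finset.sum_range_pow_smul_eq_add_smul {R M : Type*} [Semiring R] [AddCommMonoid M]
    [Module R M] (r : ℕ → M) (ζ : R) (N j : ℕ) (h : r (j + N) = 0) :
    ∑ k ∈ range N, ζ ^ k • r (j + k) = r j + ζ • ∑ k ∈ range N, ζ ^ k • r (j + 1 + k) := by
  cases N with
  | zero => simpa using h.symm
  | succ N =>
    rw [sum_range_succ', sum_range_succ, add_right_comm j 1 N, add_assoc j N 1, h, smul_zero,
      add_zero, add_zero, smul_sum, add_comm]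
    simp only [pow_zero, one_smul, smul_smul, ← pow_succ', add_right_comm j 1, add_assoc]

namespace ExteriorAlgebra

variable {R M : Type*} [CommRing R] [AddCommGroup M] [Module R M]

theorem ι_add_smul_mul_ι (x y : M) (a : R) : ι R (x + a • y) * ι R y = ι R x * ι R y := by
  rw [map_add, add_mul, map_smul, smul_mul_assoc, ι_sq_zero, smul_zero, add_zero]

theorem prod_ofFn_ι_of_eq_add_smul (r s : ℕ → M) (c : ℕ → R)
    (h : ∀ j, s j = r j + c j • s (j + 1)) (n : ℕ) :
    (List.ofFn fun i : Fin (n + 1) => ι R (s i)).prod =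
      (List.ofFn fun i : Fin n => ι R (r i)).prod * ι R (s n) := by
  induction n with
  | zero => simp
  | succ n ih =>
    conv_lhs => rw [List.ofFn_succ', List.prod_concat]
    conv_rhs => rw [List.ofFn_succ', List.prod_concat]
    simp only [Fin.val_castSucc, Fin.val_last]
    rw [ih, mul_assoc, mul_assoc, h n, ι_add_smul_mul_ι]

end ExteriorAlgebra

/-- `ζ` plays the role of `z⁻¹`; as `r` vanishes from `N` on, the tails are finite sums. -/
theorem stmt_14 (R : Type*) [CommRing R] (M : Type*) [AddCommGroup M] [Module R M]
    (r : ℕ → M) (N : ℕ) (hr : ∀ k, N ≤ k → r k = 0) (ζ : R) (n : ℕ) :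
    (List.ofFn fun i : Fin (n + 1) =>
      ExteriorAlgebra.ι R (∑ k ∈ Finset.range N, ζ ^ k • r ((i : ℕ) + 1 + k))).prod =
    (List.ofFn fun i : Fin n => ExteriorAlgebra.ι R (r ((i : ℕ) + 1))).prod *
      ExteriorAlgebra.ι R (∑ k ∈ Finset.range N, ζ ^ k • r (n + 1 + k)) :=
  ExteriorAlgebra.prod_ofFn_ι_of_eq_add_smul (fun j => r (j + 1))
    (fun j => ∑ k ∈ Finset.range N, ζ ^ k • r (j + 1 + k)) (fun _ => ζ)
    (fun j => Finset.sum_range_pow_smul_eq_add_smul r ζ N (j + 1) (hr _ (by omega))) n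
end

section
/- Let μ be a positive Borel measure on T with monic Szegő polynomials P_l and reciprocals P_l^*, and let {φ_{n⃗,1}^{(l)}} be the extended-CMV orthogonal Laurent polynomials for an arbitrary ordering vector n⃗ = (n_+, n_-). Then z^{ν_-(l)} φ_{n⃗,1}^{(l)}(z) = P_l(z) when a(l) = 1, and z^{ν_-(l)} φ_{n⃗,1}^{(l)}(z) = P_l^*(z) when a(l) = 2. -/
open MeasureTheory

/-- In the extended CMV ordering with block sizes `n₊, n₋`, the `l`-th monomial is a
nonnegative power (`a(l) = 1`) iff `l mod (n₊+n₋) < n₊`; otherwise `a(l) = 2`. -/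
def extA (np nm l : ℕ) : ℕ := if l % (np + nm) < np then 1 else 2

/-- `ν₊(l)`: the number of nonnegative-power monomials among indices `0, …, l`. -/
def extNuP (np nm l : ℕ) : ℕ :=
  ((Finset.range (l + 1)).filter fun k => extA np nm k = 1).card

/-- `ν₋(l)`: the number of negative-power monomials among indices `0, …, l`. -/
def extNuM (np nm l : ℕ) : ℕ :=
  ((Finset.range (l + 1)).filter fun k => extA np nm k = 2).card

/-!
Multiplying by `z^{ν₋(l)}` turns `φ⁽ˡ⁾` into a polynomial `Q` of degree `l` whose
orthogonality window becomes `z⁰, …, z^{l-1}` when `a(l) = 1` (then `ν₋(l) = ν₋(l-1)`) and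
`z¹, …, zˡ` when `a(l) = 2` (then `ν₋(l) = ν₋(l-1) + 1`), since `ν₊(l-1) + ν₋(l-1) = l`.
Positivity of `μ` makes the Toeplitz matrix of its moments nonsingular, so a monic polynomial
of degree `l` orthogonal to `z⁰, …, z^{l-1}` is unique: it is `P_l`. In the second case the
conjugate reflection of `Q` is such a polynomial, hence `Q = P_l^*`.
-/

open Complex ComplexConjugate

lemma conj_exp_ofReal_mul_I (θ : ℝ) : conj (exp (θ * I)) = (exp (θ * I))⁻¹ := by
  rw [← exp_conj, ← exp_neg, map_mul, conj_ofReal, conj_I, mul_neg]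

noncomputable def trigMoment (μ : Measure ℝ) (m : ℤ) : ℂ := ∫ θ, exp (θ * I) ^ m ∂μ

lemma conj_trigMoment (μ : Measure ℝ) (m : ℤ) : conj (trigMoment μ m) = trigMoment μ (-m) := by
  simp only [trigMoment, ← integral_conj, map_zpow₀, conj_exp_ofReal_mul_I, inv_zpow, zpow_neg]

section Integrals

variable (μ : Measure ℝ) [IsFiniteMeasure μ]

lemma integrable_exp_mul_I_zpow (m : ℤ) : Integrable (fun θ : ℝ => exp (θ * I) ^ m) μ := by
  refine ⟨(Continuous.zpow₀ (by fun_prop) m fun θ => Or.inl (exp_ne_zero _)).aestronglyMeasurable,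
    HasFiniteIntegral.of_bounded (C := 1) (Filter.Eventually.of_forall fun θ => ?_)⟩
  rw [norm_zpow, norm_exp_ofReal_mul_I, one_zpow]

lemma integral_sum_mul_exp_mul_I_zpow {ι : Type*} (s : Finset ι) (d : ι → ℂ) (m : ι → ℤ) :
    ∫ θ, ∑ j ∈ s, d j * exp (θ * I) ^ m j ∂μ = ∑ j ∈ s, d j * trigMoment μ (m j) := by
  rw [integral_finsetSum s fun j _ => (integrable_exp_mul_I_zpow μ (m j)).const_mul _]
  exact Finset.sum_congr rfl fun j _ => integral_const_mul _ _

lemma integral_laurent_mul_exp_neg {f : ℂ → ℂ} (c : ℕ → ℂ) (n : ℕ) (s k : ℤ)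
    (hf : ∀ z, z ≠ 0 → f z = ∑ j ∈ Finset.range n, c j * z ^ ((j : ℤ) - s)) :
    ∫ θ, f (exp (θ * I)) * exp (-(k : ℂ) * θ * I) ∂μ
      = ∑ j ∈ Finset.range n, c j * trigMoment μ ((j : ℤ) - s - k) := by
  rw [← integral_sum_mul_exp_mul_I_zpow]
  refine integral_congr_ae (Filter.Eventually.of_forall fun θ => ?_)
  dsimp only
  have hexp : exp (-(k : ℂ) * θ * I) = exp (θ * I) ^ (-k) := by
    rw [← exp_int_mul]; push_cast; ring_nf
  rw [hf _ (exp_ne_zero _), hexp, Finset.sum_mul]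
  refine Finset.sum_congr rfl fun j _ => ?_
  rw [mul_assoc, ← zpow_add₀ (exp_ne_zero _), sub_eq_add_neg _ k]

lemma ofReal_integral_normSq_sum (n : ℕ) (d : ℕ → ℂ) :
    ((∫ θ, normSq (∑ j ∈ Finset.range n, d j * exp (θ * I) ^ j) ∂μ : ℝ) : ℂ)
      = ∑ k ∈ Finset.range n, conj (d k) *
          ∑ j ∈ Finset.range n, d j * trigMoment μ ((j : ℤ) - k) := by
  rw [← integral_complex_ofReal]
  simp only [← integral_sum_mul_exp_mul_I_zpow, ← integral_const_mul]
  rw [← integral_finsetSum _ fun k _ =>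
    ((integrable_finsetSum _ fun j _ => (integrable_exp_mul_I_zpow μ _).const_mul _).const_mul _)]
  refine integral_congr_ae (Filter.Eventually.of_forall fun θ => ?_)
  dsimp only
  simp only [← mul_conj, map_sum, Finset.sum_mul, Finset.mul_sum, map_mul, map_pow,
    conj_exp_ofReal_mul_I]
  refine Finset.sum_congr rfl fun k _ => Finset.sum_congr rfl fun j _ => ?_
  rw [zpow_sub₀ (exp_ne_zero _), zpow_natCast, zpow_natCast, inv_pow]
  ring

end Integrals

section Toeplitz

variable {μ : Measure ℝ} [IsFiniteMeasure μ]
  (hpd : ∀ (n : ℕ) (c : ℕ → ℂ),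
    (∫ θ, normSq (∑ j ∈ Finset.range n, c j * exp ((θ : ℂ) * I) ^ j) ∂μ) = 0 →
      ∀ j < n, c j = 0)
include hpd

lemma eq_zero_of_sum_mul_trigMoment_eq_zero {n : ℕ} {d : ℕ → ℂ}
    (h : ∀ k < n, ∑ j ∈ Finset.range n, d j * trigMoment μ ((j : ℤ) - k) = 0) :
    ∀ j < n, d j = 0 := by
  refine hpd n d (ofReal_injective ?_)
  rw [ofReal_integral_normSq_sum, ofReal_zero]
  exact Finset.sum_eq_zero fun k hk => by rw [h k (Finset.mem_range.mp hk), mul_zero]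

lemma eq_of_orthogonal_of_leading_eq {l : ℕ} {c d : ℕ → ℂ} (hlead : c l = d l)
    (hc : ∀ k < l, ∑ j ∈ Finset.range (l + 1), c j * trigMoment μ ((j : ℤ) - k) = 0)
    (hd : ∀ k < l, ∑ j ∈ Finset.range (l + 1), d j * trigMoment μ ((j : ℤ) - k) = 0) :
    ∀ j ≤ l, c j = d j := by
  have hdiff : ∀ j < l, c j - d j = 0 := eq_zero_of_sum_mul_trigMoment_eq_zero hpd fun k hk => by
    have h := sub_eq_zero.mpr ((hc k hk).trans (hd k hk).symm)
    rw [← Finset.sum_sub_distrib, Finset.sum_range_succ, ← sub_mul, hlead, sub_self, zero_mul,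
      add_zero] at h
    simpa only [sub_mul] using h
  intro j hj
  rcases hj.lt_or_eq with hj | rfl
  · exact sub_eq_zero.mp (hdiff j hj)
  · exact hlead

end Toeplitz

lemma sum_conj_reflect_mul_trigMoment (μ : Measure ℝ) (c : ℕ → ℂ) {l k : ℕ} (hk : k ≤ l) :
    ∑ j ∈ Finset.range (l + 1), conj (c (l - j)) * trigMoment μ ((j : ℤ) - k)
      = conj (∑ j ∈ Finset.range (l + 1), c j * trigMoment μ ((j : ℤ) - (l - k : ℕ))) := by
  rw [map_sum, ← Finset.sum_range_reflect]
  refine Finset.sum_congr rfl fun j hj => ?_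
  have hj : j ≤ l := Nat.lt_succ_iff.mp (Finset.mem_range.mp hj)
  rw [map_mul, conj_trigMoment, Nat.add_sub_cancel, Nat.sub_sub_self hj]
  congr 2
  omega

lemma zpow_mul_sum_mul_zpow_sub {z : ℂ} (hz : z ≠ 0) (n ν : ℕ) (c : ℕ → ℂ) :
    z ^ (ν : ℤ) * ∑ j ∈ Finset.range n, c j * z ^ ((j : ℤ) - ν)
      = ∑ j ∈ Finset.range n, c j * z ^ j := by
  rw [Finset.mul_sum]
  refine Finset.sum_congr rfl fun j _ => ?_
  rw [mul_left_comm, ← zpow_add₀ hz, add_sub_cancel, zpow_natCast]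

lemma extNuP_add_extNuM (np nm m : ℕ) : extNuP np nm m + extNuM np nm m = m + 1 := by
  have hfilter : (Finset.range (m + 1)).filter (fun k => extA np nm k = 2)
      = (Finset.range (m + 1)).filter (fun k => ¬ extA np nm k = 1) :=
    Finset.filter_congr fun k _ => by unfold extA; split_ifs <;> simp
  rw [extNuP, extNuM, hfilter, Finset.card_filter_add_card_filter_not, Finset.card_range]

lemma extNuM_succ (np nm m : ℕ) : extNuM np nm (m + 1)
    = extNuM np nm m + if extA np nm (m + 1) = 2 then 1 else 0 := by
  rw [extNuM, extNuM, Finset.range_add_one, Finset.filter_insert]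
  split_ifs
  · rw [Finset.card_insert_of_notMem (by simp)]
  · rfl

lemma extNu_pred (np nm : ℕ) {l : ℕ} (hl : 1 ≤ l) :
    extNuP np nm (l - 1) + extNuM np nm (l - 1) = l ∧
      extNuM np nm l = extNuM np nm (l - 1) + if extA np nm l = 2 then 1 else 0 := by
  obtain ⟨m, rfl⟩ := Nat.exists_eq_add_of_le' hl
  exact ⟨extNuP_add_extNuM np nm m, extNuM_succ np nm m⟩

lemma extNu_window_of_extA_eq_one {np nm l k : ℕ} (ha : extA np nm l = 1) (hk : k < l) :
    1 ≤ l ∧ -(extNuM np nm (l - 1) : ℤ) ≤ k - extNuM np nm l ∧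
      k - extNuM np nm l ≤ (extNuP np nm (l - 1) : ℤ) - 1 := by
  obtain ⟨hsum, hν⟩ := extNu_pred np nm (l := l) (by omega)
  rw [if_neg (by omega)] at hν
  omega

lemma extNu_window_of_extA_eq_two {np nm l k : ℕ} (ha : extA np nm l = 2) (hk₀ : 1 ≤ k)
    (hk : k ≤ l) :
    1 ≤ l ∧ -(extNuM np nm (l - 1) : ℤ) ≤ k - extNuM np nm l ∧
      k - extNuM np nm l ≤ (extNuP np nm (l - 1) : ℤ) - 1 := by
  obtain ⟨hsum, hν⟩ := extNu_pred np nm (l := l) (by omega)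
  rw [if_pos ha] at hν
  omega

theorem stmt_17_general (np nm : ℕ)
    (μ : Measure ℝ) [IsFiniteMeasure μ]
    (hpd : ∀ (n : ℕ) (c : ℕ → ℂ),
      (∫ θ, Complex.normSq (∑ j ∈ Finset.range n,
        c j * Complex.exp ((θ : ℂ) * Complex.I) ^ j) ∂μ) = 0 → ∀ j < n, c j = 0)
    (p : ℕ → ℕ → ℂ) (hmonic : ∀ l, p l l = 1)
    (P : ℕ → ℂ → ℂ)
    (hP : ∀ l z, P l z = ∑ j ∈ Finset.range (l + 1), p l j * z ^ j)
    (hPorth : ∀ l k, k < l →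
      (∫ θ, P l (Complex.exp ((θ : ℂ) * Complex.I)) *
        Complex.exp (-(k : ℂ) * (θ : ℂ) * Complex.I) ∂μ) = 0)
    (φ : ℕ → ℂ → ℂ)
    (hφform : ∀ l : ℕ, ∃ c : ℕ → ℂ,
      (extA np nm l = 1 → c l = 1) ∧ (extA np nm l = 2 → c 0 = 1) ∧
      ∀ z : ℂ, z ≠ 0 → φ l z =
        ∑ j ∈ Finset.range (l + 1), c j * z ^ ((j : ℤ) - (extNuM np nm l : ℤ)))
    (hφorth : ∀ l : ℕ, 1 ≤ l → ∀ k : ℤ,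
      -(extNuM np nm (l - 1) : ℤ) ≤ k → k ≤ (extNuP np nm (l - 1) : ℤ) - 1 →
      (∫ θ, φ l (Complex.exp ((θ : ℂ) * Complex.I)) *
        Complex.exp (-(k : ℂ) * (θ : ℂ) * Complex.I) ∂μ) = 0) :
    ∀ (l : ℕ) (z : ℂ), z ≠ 0 →
      (extA np nm l = 1 → z ^ (extNuM np nm l : ℤ) * φ l z = P l z) ∧
      (extA np nm l = 2 → z ^ (extNuM np nm l : ℤ) * φ l z =
        ∑ j ∈ Finset.range (l + 1), (starRingEnd ℂ) (p l j) * z ^ (l - j)) := by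
  intro l z hz
  obtain ⟨c, hc1, hc2, hcform⟩ := hφform l
  have hPm : ∀ k < l, ∑ j ∈ Finset.range (l + 1), p l j * trigMoment μ ((j : ℤ) - k) = 0 :=
    fun k hk => by
      have h := integral_laurent_mul_exp_neg μ (f := P l) (p l) (l + 1) 0 k fun z _ => by simp [hP]
      rw [Int.cast_natCast, hPorth l k hk] at h
      simpa only [sub_zero] using h.symm
  have hQm : ∀ k : ℕ, 1 ≤ l ∧ -(extNuM np nm (l - 1) : ℤ) ≤ k - extNuM np nm l ∧
      k - extNuM np nm l ≤ (extNuP np nm (l - 1) : ℤ) - 1 →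
      ∑ j ∈ Finset.range (l + 1), c j * trigMoment μ ((j : ℤ) - k) = 0 := fun k ⟨hl, h₁, h₂⟩ => by
    have h := integral_laurent_mul_exp_neg μ c (l + 1) (extNuM np nm l) (k - extNuM np nm l) hcform
    rw [hφorth l hl _ h₁ h₂] at h
    simpa only [sub_sub_sub_cancel_right] using h.symm
  refine ⟨fun ha => ?_, fun ha => ?_⟩
  · have hcoef := eq_of_orthogonal_of_leading_eq hpd (c := c) (d := p l) (by rw [hc1 ha, hmonic])
      (fun k hk => hQm k (extNu_window_of_extA_eq_one ha hk)) hPm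
    rw [hcform z hz, zpow_mul_sum_mul_zpow_sub hz, hP]
    exact Finset.sum_congr rfl fun j hj => by
      rw [hcoef j (Nat.lt_succ_iff.mp (Finset.mem_range.mp hj))]
  · have hrefl := eq_of_orthogonal_of_leading_eq hpd (c := fun j => conj (c (l - j)))
      (by rw [Nat.sub_self, hc2 ha, hmonic, map_one])
      (fun k hk => by
        rw [sum_conj_reflect_mul_trigMoment μ c hk.le,
          hQm _ (extNu_window_of_extA_eq_two ha (by omega) (by omega)), map_zero]) hPm
    rw [hcform z hz, zpow_mul_sum_mul_zpow_sub hz, ← Finset.sum_range_reflect]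
    refine Finset.sum_congr rfl fun j hj => ?_
    rw [← hrefl j (Nat.lt_succ_iff.mp (Finset.mem_range.mp hj)), conj_conj, Nat.add_sub_cancel]

/-- Let `μ` be a (finite, nondegenerate) positive Borel measure on the circle with monic
Szegő polynomials `P_l` and reciprocals `P_l^*`, and let `φ⁽ˡ⁾` be the extended-CMV
orthogonal Laurent polynomials for an arbitrary ordering vector `n⃗ = (n₊, n₋)`
(lying in `span{z^{−ν₋(l)},…,z^{ν₊(l)−1}}`, suitably normalized, and orthogonal to
`z^k` for `k = −ν₋(l−1),…,ν₊(l−1)−1`).  Then `z^{ν₋(l)} φ⁽ˡ⁾(z) = P_l(z)` when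
`a(l) = 1`, and `z^{ν₋(l)} φ⁽ˡ⁾(z) = P_l^*(z)` when `a(l) = 2`. -/
theorem stmt_17 (np nm : ℕ) (hnp : 1 ≤ np) (hnm : 1 ≤ nm)
    (μ : Measure ℝ) [IsFiniteMeasure μ]
    (hpd : ∀ (n : ℕ) (c : ℕ → ℂ),
      (∫ θ, Complex.normSq (∑ j ∈ Finset.range n,
        c j * Complex.exp ((θ : ℂ) * Complex.I) ^ j) ∂μ) = 0 → ∀ j < n, c j = 0)
    (p : ℕ → ℕ → ℂ) (hmonic : ∀ l, p l l = 1)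
    (P : ℕ → ℂ → ℂ)
    (hP : ∀ l z, P l z = ∑ j ∈ Finset.range (l + 1), p l j * z ^ j)
    (hPorth : ∀ l k, k < l →
      (∫ θ, P l (Complex.exp ((θ : ℂ) * Complex.I)) *
        Complex.exp (-(k : ℂ) * (θ : ℂ) * Complex.I) ∂μ) = 0)
    (φ : ℕ → ℂ → ℂ)
    (hφform : ∀ l : ℕ, ∃ c : ℕ → ℂ,
      (extA np nm l = 1 → c l = 1) ∧ (extA np nm l = 2 → c 0 = 1) ∧
      ∀ z : ℂ, z ≠ 0 → φ l z =
        ∑ j ∈ Finset.range (l + 1), c j * z ^ ((j : ℤ) - (extNuM np nm l : ℤ)))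
    (hφorth : ∀ l : ℕ, 1 ≤ l → ∀ k : ℤ,
      -(extNuM np nm (l - 1) : ℤ) ≤ k → k ≤ (extNuP np nm (l - 1) : ℤ) - 1 →
      (∫ θ, φ l (Complex.exp ((θ : ℂ) * Complex.I)) *
        Complex.exp (-(k : ℂ) * (θ : ℂ) * Complex.I) ∂μ) = 0) :
    ∀ (l : ℕ) (z : ℂ), z ≠ 0 →
      (extA np nm l = 1 → z ^ (extNuM np nm l : ℤ) * φ l z = P l z) ∧
      (extA np nm l = 2 → z ^ (extNuM np nm l : ℤ) * φ l z =
        ∑ j ∈ Finset.range (l + 1), (starRingEnd ℂ) (p l j) * z ^ (l - j)) :=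
  stmt_17_general np nm μ hpd p hmonic P hP hPorth φ hφform hφorth
end

section
/- Under the Toda flows generated by t_{11} and t_{21} on the CMV Lax matrix L₁ = S₁ΥS₁^{-1} (with B_{1,1} = (L₁)_+ the upper-triangular projection and B_{2,1} = (L₂)_- the strictly lower projection), the Lax equations ∂L₁/∂t_{11} = [B_{1,1}, L₁] and ∂L₁/∂t_{21} = [B_{2,1}, L₁], read off on the entries (2k, 2k+1) and (2k+1, 2k+2), imply the Toeplitz-lattice equations ∂α_k^{(1)}/∂t_{11} = α_{k+1}^{(1)}(1 − α_k^{(1)}\bar α_k^{(2)}) and ∂\bar α_k^{(2)}/∂t_{11} = −\bar α_{k-1}^{(2)}(1 − α_k^{(1)}\bar α_k^{(2)}) for k ≥ 1. -/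
/-- The pentadiagonal CMV Lax matrix `L₁ = S₁ Υ S₁⁻¹` expressed through the reflection
coefficients: `α k` stands for `α_k^{(1)}` and `β k` for `conj α_k^{(2)}`, with
`ρ_k² = 1 − α_k β_k` (conventions `α 0 = β 0 = 1`). -/
noncomputable def laxL1 (α β : ℕ → ℂ) (i j : ℕ) : ℂ :=
  if i % 2 = 0 then
    -- row `2k`
    if j = i + 2 then 1
    else if j = i + 1 then -α (i + 2)
    else if j = i then -(β i) * α (i + 1)
    else if j + 1 = i then -(1 - α i * β i) * α (i + 1)
    else 0
  else
    -- row `2k+1`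
    if j = i + 1 then β i
    else if j = i then -(β i) * α (i + 1)
    else if j + 1 = i then (1 - α i * β i) * β (i - 1)
    else if j + 2 = i then (1 - α i * β i) * (1 - α (i - 1) * β (i - 1))
    else 0

/-- The second CMV Lax matrix `L₂ = S₂ Υᵀ S₂⁻¹` in the same parametrization. -/
noncomputable def laxL2 (α β : ℕ → ℂ) (i j : ℕ) : ℂ :=
  if i % 2 = 0 then
    if j = i + 1 then α i
    else if j = i then -(α i) * β (i + 1)
    else if j + 1 = i then (1 - α i * β i) * α (i - 1)
    else if j + 2 = i then (1 - α (i - 1) * β (i - 1)) * (1 - α i * β i)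
    else 0
  else
    if j = i + 2 then 1
    else if j = i + 1 then -β (i + 2)
    else if j = i then -(α i) * β (i + 1)
    else if j + 1 = i then -(1 - α i * β i) * β (i + 1)
    else 0

/-- `B_{1,1} = (L₁)₊`: the upper-triangular (including diagonal) projection of `L₁`. -/
noncomputable def laxB1 (α β : ℕ → ℂ) (i j : ℕ) : ℂ :=
  if i ≤ j then laxL1 α β i j else 0

/-- `B_{2,1} = (L₂)₋`: the strictly lower-triangular projection of `L₂`. -/
noncomputable def laxB2 (α β : ℕ → ℂ) (i j : ℕ) : ℂ :=
  if j < i then laxL2 α β i j else 0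

section helpers
variable (α β : ℕ → ℂ)

lemma B1_le {i j : ℕ} (h : i ≤ j) : laxB1 α β i j = laxL1 α β i j := by
  unfold laxB1; exact if_pos h

lemma B1_lt {i j : ℕ} (h : j < i) : laxB1 α β i j = 0 := by
  unfold laxB1; exact if_neg (by omega)

lemma L1_far {i j : ℕ} (h : i + 2 < j) : laxL1 α β i j = 0 := by
  unfold laxL1; split_ifs <;> first | rfl | (exfalso; omega)

lemma L1_low {i j : ℕ} (h : j + 2 < i) : laxL1 α β i j = 0 := by
  unfold laxL1; split_ifs <;> first | rfl | (exfalso; omega)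

lemma L1_zero_oup {i j : ℕ} (hi : i % 2 = 1) (h : j = i + 2) : laxL1 α β i j = 0 := by
  subst h; unfold laxL1; split_ifs <;> first | rfl | (exfalso; omega)

lemma L1_zero_ed {i j : ℕ} (hi : i % 2 = 0) (h : i = j + 2) : laxL1 α β i j = 0 := by
  subst h; unfold laxL1; split_ifs <;> first | rfl | (exfalso; omega)

variable {i : ℕ}

lemma L1_e2 (hi : i % 2 = 0) : laxL1 α β i (i+2) = 1 := by
  unfold laxL1; split_ifs <;> first | rfl | (exfalso; omega)

lemma L1_e1 (hi : i % 2 = 0) : laxL1 α β i (i+1) = -α (i+2) := by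
  unfold laxL1; split_ifs <;> first | rfl | (exfalso; omega)

lemma L1_e0 (hi : i % 2 = 0) : laxL1 α β i i = -β i * α (i+1) := by
  unfold laxL1; split_ifs <;> first | rfl | (exfalso; omega)

lemma L1_e1b (hi : i % 2 = 0) : laxL1 α β (i+2) (i+3) = -α (i+4) := by
  unfold laxL1; split_ifs <;> first | rfl | (exfalso; omega) | (congr 1 <;> omega)

lemma L1_e0b (hi : i % 2 = 0) : laxL1 α β (i+2) (i+2) = -β (i+2) * α (i+3) := by
  unfold laxL1; split_ifs <;> first | rfl | (exfalso; omega) | (congr 1 <;> omega)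

lemma L1_em1 (hi : i % 2 = 0) : laxL1 α β (i+2) (i+1) = -(1 - α (i+2) * β (i+2)) * α (i+3) := by
  unfold laxL1; split_ifs <;> first | rfl | (exfalso; omega) | (congr 1 <;> omega)

lemma L1_o1 (hi : i % 2 = 0) : laxL1 α β (i+1) (i+2) = β (i+1) := by
  unfold laxL1; split_ifs <;> first | rfl | (exfalso; omega)

lemma L1_o0 (hi : i % 2 = 0) : laxL1 α β (i+1) (i+1) = -β (i+1) * α (i+2) := by
  unfold laxL1; split_ifs <;> first | rfl | (exfalso; omega) | (congr 1 <;> omega)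

lemma L1_o0b (hi : i % 2 = 0) : laxL1 α β (i+3) (i+3) = -β (i+3) * α (i+4) := by
  unfold laxL1; split_ifs <;> first | rfl | (exfalso; omega) | (congr 1 <;> omega)

lemma L1_om1' (hi : i % 2 = 0) : laxL1 α β (i+1) i = (1 - α (i+1) * β (i+1)) * β i := by
  unfold laxL1; split_ifs <;> first | rfl | (exfalso; omega) | (congr 1 <;> first | rfl | omega | (congr 1 <;> omega))

lemma L1_om1 (hi : i % 2 = 0) : laxL1 α β (i+3) (i+2) = (1 - α (i+3) * β (i+3)) * β (i+2) := by
  unfold laxL1; split_ifs <;> first | rfl | (exfalso; omega) | (congr 1 <;> first | rfl | omega | (congr 1 <;> omega))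

lemma L1_om2 (hi : i % 2 = 0) : laxL1 α β (i+3) (i+1) = (1 - α (i+3) * β (i+3)) * (1 - α (i+2) * β (i+2)) := by
  unfold laxL1; split_ifs <;> first | rfl | (exfalso; omega) | (congr 1 <;> first | rfl | omega | (congr 1 <;> first | rfl | omega | (congr 1 <;> omega)))

end helpers

section comm
variable (α β : ℕ → ℂ) {i : ℕ}

private lemma mem3 {x i : ℕ} (h : x ∉ ({i, i+1, i+2} : Finset ℕ)) :
    x ≠ i ∧ x ≠ i + 1 ∧ x ≠ i + 2 := by
  simp only [Finset.mem_insert, Finset.mem_singleton] at h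
  push_neg at h; exact h

private lemma ins3 (g : ℕ → ℂ) (i : ℕ) :
    ∑ m ∈ ({i, i+1, i+2} : Finset ℕ), g m = g i + g (i+1) + g (i+2) := by
  rw [Finset.sum_insert (by simp only [Finset.mem_insert, Finset.mem_singleton]; omega),
    Finset.sum_insert (by simp only [Finset.mem_singleton]; omega), Finset.sum_singleton]
  ring

lemma comm_e1 (hi : i % 2 = 0) :
    (∑' m : ℕ, (laxB1 α β i m * laxL1 α β m (i+1) - laxL1 α β i m * laxB1 α β m (i+1)))
      = -(1 - α (i+2) * β (i+2)) * α (i+3) := by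
  rw [tsum_eq_sum (s := {i, i+1, i+2}) ?_]
  · rw [ins3, B1_le α β (le_refl i), B1_le α β (show i ≤ i+1 by omega),
      B1_le α β (show i ≤ i+2 by omega), B1_le α β (le_refl (i+1)),
      B1_lt α β (show i+1 < i+2 by omega), L1_e0 α β hi, L1_e1 α β hi, L1_o0 α β hi,
      L1_e2 α β hi, L1_em1 α β hi]
    ring
  · intro m hm
    obtain ⟨h1, h2, h3⟩ := mem3 hm
    rcases lt_or_ge m i with h | h
    · rw [B1_lt α β h]
      rcases Nat.lt_or_ge (m+2) (i+1) with h4 | h4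
      · rw [B1_le α β (by omega), L1_far α β h4]; ring
      · rw [B1_le α β (by omega), L1_zero_oup α β (show m % 2 = 1 by omega) (by omega)]; ring
    · rw [B1_le α β (by omega), L1_far α β (show i + 2 < m by omega),
        B1_lt α β (show i + 1 < m by omega)]; ring

lemma comm_o1 (hi : i % 2 = 0) :
    (∑' m : ℕ, (laxB1 α β (i+1) m * laxL1 α β m (i+2) - laxL1 α β (i+1) m * laxB1 α β m (i+2)))
      = -((1 - α (i+1) * β (i+1)) * β i) := by
  rw [tsum_eq_sum (s := {i, i+1, i+2}) ?_]
  · rw [ins3, B1_lt α β (show i < i + 1 by omega), B1_le α β (show i ≤ i+2 by omega),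
      B1_le α β (le_refl (i+1)), B1_le α β (show i+1 ≤ i+2 by omega),
      B1_le α β (le_refl (i+2)), L1_om1' α β hi, L1_e2 α β hi, L1_o0 α β hi, L1_o1 α β hi,
      L1_e0b α β hi]
    ring
  · intro m hm
    obtain ⟨h1, h2, h3⟩ := mem3 hm
    rcases lt_or_ge m i with h | h
    · rw [B1_lt α β (by omega), B1_le α β (by omega), L1_far α β (show m + 2 < i + 2 by omega)]
      ring
    · rw [B1_lt α β (show i + 2 < m by omega), mul_zero, sub_zero]
      rcases Nat.lt_or_ge (i+3) m with h4 | h4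
      · rw [B1_le α β (by omega), L1_far α β (show i + 1 + 2 < m by omega)]; ring
      · rw [B1_le α β (by omega), L1_zero_oup α β (show (i+1) % 2 = 1 by omega) (by omega)]; ring

lemma comm_d (hi : i % 2 = 0) :
    (∑' m : ℕ, (laxB1 α β (i+2) m * laxL1 α β m (i+2) - laxL1 α β (i+2) m * laxB1 α β m (i+2)))
      = -α (i+4) * ((1 - α (i+3) * β (i+3)) * β (i+2))
        + (1 - α (i+2) * β (i+2)) * α (i+3) * β (i+1) := by
  rw [tsum_eq_sum (s := {i+1, i+1+1, i+1+2}) ?_]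
  · rw [ins3, show i+1+1 = i+2 by omega, show i+1+2 = i+3 by omega,
      B1_lt α β (show i+1 < i+2 by omega), B1_le α β (show i+1 ≤ i+2 by omega),
      B1_le α β (le_refl (i+2)), B1_le α β (show i+2 ≤ i+3 by omega),
      B1_lt α β (show i+2 < i+3 by omega),
      L1_o1 α β hi, L1_em1 α β hi, L1_e0b α β hi, L1_e1b α β hi, L1_om1 α β hi]
    ring
  · intro m hm
    obtain ⟨h1, h2, h3⟩ := mem3 hm
    rcases lt_or_ge m (i+1) with h | h
    · rw [B1_lt α β (by omega)]
      rcases Nat.lt_or_ge (m+2) (i+2) with h4 | h4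
      · rw [L1_low α β h4]; ring
      · rw [L1_zero_ed α β (show (i+2) % 2 = 0 by omega) (by omega)]; ring
    · have h5 : i + 3 < m := by omega
      rcases Nat.lt_or_ge (i+4) m with h4 | h4
      · rw [B1_le α β (by omega), L1_far α β (show i+2+2 < m by omega),
          B1_lt α β (show i+2 < m by omega)]; ring
      · rw [B1_lt α β (show i+2 < m by omega), mul_zero, sub_zero,
          L1_zero_ed α β (show m % 2 = 0 by omega) (by omega)]; ring

lemma comm_sub (hi : i % 2 = 0) :
    (∑' m : ℕ, (laxB1 α β (i+2) m * laxL1 α β m (i+1) - laxL1 α β (i+2) m * laxB1 α β m (i+1)))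
      = -((1 - α (i+2) * β (i+2)) * α (i+3) * β (i+1) * α (i+2))
        + β (i+2) * α (i+3) * α (i+3) * (1 - α (i+2) * β (i+2))
        - α (i+4) * (1 - α (i+3) * β (i+3)) * (1 - α (i+2) * β (i+2)) := by
  rw [tsum_eq_sum (s := {i+1, i+1+1, i+1+2}) ?_]
  · rw [ins3, show i+1+1 = i+2 by omega, show i+1+2 = i+3 by omega,
      B1_lt α β (show i+1 < i+2 by omega), B1_le α β (le_refl (i+1)),
      B1_le α β (le_refl (i+2)),
      B1_le α β (show i+2 ≤ i+3 by omega), B1_lt α β (show i+1 < i+3 by omega),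
      L1_em1 α β hi, L1_o0 α β hi, L1_e0b α β hi, L1_e1b α β hi, L1_om2 α β hi]
    ring
  · intro m hm
    obtain ⟨h1, h2, h3⟩ := mem3 hm
    rcases lt_or_ge m (i+1) with h | h
    · rw [B1_lt α β (by omega)]
      rcases Nat.lt_or_ge (m+2) (i+2) with h4 | h4
      · rw [L1_low α β h4]; ring
      · rw [L1_zero_ed α β (show (i+2) % 2 = 0 by omega) (by omega)]; ring
    · have h5 : i + 3 < m := by omega
      rw [B1_lt α β (show i+1 < m by omega), mul_zero, sub_zero,
        L1_low α β (show i+1+2 < m by omega), mul_zero]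

lemma comm_sub2 (hi : i % 2 = 0) :
    (∑' m : ℕ, (laxB1 α β (i+3) m * laxL1 α β m (i+2) - laxL1 α β (i+3) m * laxB1 α β m (i+2)))
      = -((1 - α (i+3) * β (i+3)) * (1 - α (i+2) * β (i+2)) * β (i+1))
        + (1 - α (i+3) * β (i+3)) * β (i+2) * β (i+2) * α (i+3)
        - β (i+3) * α (i+4) * (1 - α (i+3) * β (i+3)) * β (i+2) := by
  rw [tsum_eq_sum (s := {i+1, i+1+1, i+1+2}) ?_]
  · rw [ins3, show i+1+1 = i+2 by omega, show i+1+2 = i+3 by omega,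
      B1_lt α β (show i+1 < i+3 by omega), B1_le α β (show i+1 ≤ i+2 by omega),
      B1_lt α β (show i+2 < i+3 by omega), B1_le α β (le_refl (i+2)),
      B1_le α β (le_refl (i+3)),
      L1_om2 α β hi, L1_o1 α β hi, L1_om1 α β hi, L1_e0b α β hi, L1_o0b α β hi]
    ring
  · intro m hm
    obtain ⟨h1, h2, h3⟩ := mem3 hm
    rcases lt_or_ge m (i+1) with h | h
    · rw [B1_lt α β (by omega), L1_low α β (show m+2 < i+3 by omega)]; ring
    · have h5 : i + 3 < m := by omega
      rw [B1_lt α β (show i+2 < m by omega), mul_zero, sub_zero]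
      rcases Nat.lt_or_ge (i+5) m with h4 | h4
      · rw [B1_le α β (by omega), L1_far α β (show i+3+2 < m by omega)]; ring
      · rcases Nat.lt_or_ge m (i+5) with h6 | h6
        · rw [B1_le α β (by omega), L1_zero_ed α β (show m % 2 = 0 by omega) (by omega)]; ring
        · rw [B1_le α β (by omega), L1_zero_oup α β (show (i+3) % 2 = 1 by omega) (by omega)]
          ring

lemma comm_00 :
    (∑' m : ℕ, (laxB1 α β 0 m * laxL1 α β m 0 - laxL1 α β 0 m * laxB1 α β m 0))
      = -α 2 * ((1 - α 1 * β 1) * β 0) := by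
  rw [tsum_eq_sum (s := {0, 0+1, 0+2}) ?_]
  · rw [ins3, B1_le α β (le_refl 0), B1_le α β (show 0 ≤ 0+1 by omega),
      B1_le α β (show 0 ≤ 0+2 by omega), B1_lt α β (show 0 < 0+1 by omega),
      B1_lt α β (show 0 < 0+2 by omega),
      L1_e0 α β rfl, L1_e1 α β rfl, L1_e2 α β rfl, L1_om1' α β rfl,
      L1_zero_ed α β (show (0+2) % 2 = 0 by omega) (show 0+2 = 0+2 by omega)]
    norm_num
  · intro m hm
    obtain ⟨h1, h2, h3⟩ := mem3 hm
    rw [B1_le α β (by omega), L1_far α β (show 0 + 2 < m by omega),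
      B1_lt α β (show 0 < m by omega)]
    ring

end comm

/-- The Toeplitz lattice from the CMV Lax equations.  Given time-dependent reflection
coefficients `α_k^{(1)} = α k`, `conj α_k^{(2)} = β k` (depending on the two times
`(t₁₁, t₂₁) : ℝ × ℝ`) whose pentadiagonal Lax matrices satisfy entrywise
`∂L₁/∂t₁₁ = [B_{1,1}, L₁]`, `∂L₂/∂t₁₁ = [B_{1,1}, L₂]` and `∂L₁/∂t₂₁ = [B_{2,1}, L₁]`,
the Toeplitz-lattice equations hold for every `k ≥ 1`:
`∂α_k/∂t₁₁ = α_{k+1}(1 − α_k β_k)` and `∂β_k/∂t₁₁ = −β_{k-1}(1 − α_k β_k)`. -/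
theorem stmt_19 (α β : ℕ → ℝ × ℝ → ℂ)
    (hα0 : ∀ t, α 0 t = 1) (hβ0 : ∀ t, β 0 t = 1)
    (hdiff : ∀ (k : ℕ) (t : ℝ × ℝ),
      DifferentiableAt ℝ (fun s => α k (s, t.2)) t.1 ∧
      DifferentiableAt ℝ (fun s => β k (s, t.2)) t.1)
    (hLax1 : ∀ (i j : ℕ) (t : ℝ × ℝ),
      HasDerivAt (fun s => laxL1 (fun k => α k (s, t.2)) (fun k => β k (s, t.2)) i j)
        (∑' m : ℕ,
          (laxB1 (fun k => α k t) (fun k => β k t) i m *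
              laxL1 (fun k => α k t) (fun k => β k t) m j -
            laxL1 (fun k => α k t) (fun k => β k t) i m *
              laxB1 (fun k => α k t) (fun k => β k t) m j)) t.1)
    (hLax2 : ∀ (i j : ℕ) (t : ℝ × ℝ),
      HasDerivAt (fun s => laxL2 (fun k => α k (s, t.2)) (fun k => β k (s, t.2)) i j)
        (∑' m : ℕ,
          (laxB1 (fun k => α k t) (fun k => β k t) i m *
              laxL2 (fun k => α k t) (fun k => β k t) m j -
            laxL2 (fun k => α k t) (fun k => β k t) i m *
              laxB1 (fun k => α k t) (fun k => β k t) m j)) t.1)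
    (hLax1' : ∀ (i j : ℕ) (t : ℝ × ℝ),
      HasDerivAt (fun s => laxL1 (fun k => α k (t.1, s)) (fun k => β k (t.1, s)) i j)
        (∑' m : ℕ,
          (laxB2 (fun k => α k t) (fun k => β k t) i m *
              laxL1 (fun k => α k t) (fun k => β k t) m j -
            laxL1 (fun k => α k t) (fun k => β k t) i m *
              laxB2 (fun k => α k t) (fun k => β k t) m j)) t.2)
    (k : ℕ) (hk : 1 ≤ k) (t : ℝ × ℝ) :
    HasDerivAt (fun s => α k (s, t.2)) (α (k + 1) t * (1 - α k t * β k t)) t.1 ∧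
    HasDerivAt (fun s => β k (s, t.2)) (-(β (k - 1) t) * (1 - α k t * β k t)) t.1 := by
  obtain ⟨Da, HA⟩ : ∃ D : ℕ → ℂ, ∀ n, HasDerivAt (fun s => α n (s, t.2)) (D n) t.1 :=
    ⟨_, fun n => ((hdiff n t).1).hasDerivAt⟩
  obtain ⟨Db, HB⟩ : ∃ D : ℕ → ℂ, ∀ n, HasDerivAt (fun s => β n (s, t.2)) (D n) t.1 :=
    ⟨_, fun n => ((hdiff n t).2).hasDerivAt⟩
  have getEq : ∀ (R J : ℕ) (g : ℝ → ℂ) (D : ℂ),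
      (∀ s, laxL1 (fun k => α k (s, t.2)) (fun k => β k (s, t.2)) R J = g s) →
      HasDerivAt g D t.1 →
      D = ∑' m : ℕ,
          (laxB1 (fun k => α k t) (fun k => β k t) R m *
              laxL1 (fun k => α k t) (fun k => β k t) m J -
            laxL1 (fun k => α k t) (fun k => β k t) R m *
              laxB1 (fun k => α k t) (fun k => β k t) m J) := by
    intro R J g D hfun hg
    have h := hLax1 R J t
    rw [funext hfun] at h
    exact hg.unique h
  have F1 : ∀ i, i % 2 = 0 → Da (i+2) = α (i+3) t * (1 - α (i+2) t * β (i+2) t) := by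
    intro i hi
    have e := getEq i (i+1) (fun s => -α (i+2) (s, t.2)) (-(Da (i+2)))
      (fun s => L1_e1 (fun k => α k (s, t.2)) (fun k => β k (s, t.2)) hi) ((HA (i+2)).neg)
    rw [comm_e1 (fun k => α k t) (fun k => β k t) hi] at e
    linear_combination -e
  have F2 : ∀ i, i % 2 = 0 → Db (i+1) = -(β i t) * (1 - α (i+1) t * β (i+1) t) := by
    intro i hi
    have e := getEq (i+1) (i+2) (fun s => β (i+1) (s, t.2)) (Db (i+1))
      (fun s => L1_o1 (fun k => α k (s, t.2)) (fun k => β k (s, t.2)) hi) (HB (i+1))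
    rw [comm_o1 (fun k => α k t) (fun k => β k t) hi] at e
    linear_combination e
  have F3 : ∀ i, i % 2 = 0 → Da (i+3) = α (i+4) t * (1 - α (i+3) t * β (i+3) t) := by
    intro i hi
    have e3 := getEq (i+2) (i+2) (fun s => -β (i+2) (s, t.2) * α (i+3) (s, t.2))
      (-(Db (i+2)) * α (i+3) t + -β (i+2) t * Da (i+3))
      (fun s => L1_e0b (fun k => α k (s, t.2)) (fun k => β k (s, t.2)) hi)
      (((HB (i+2)).neg).mul (HA (i+3)))
    have e4 := getEq (i+2) (i+1)
      (fun s => -(1 - α (i+2) (s, t.2) * β (i+2) (s, t.2)) * α (i+3) (s, t.2))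
      (-(-(Da (i+2) * β (i+2) t + α (i+2) t * Db (i+2))) * α (i+3) t
        + -(1 - α (i+2) t * β (i+2) t) * Da (i+3))
      (fun s => L1_em1 (fun k => α k (s, t.2)) (fun k => β k (s, t.2)) hi)
      (((((HA (i+2)).mul (HB (i+2))).const_sub 1).neg).mul (HA (i+3)))
    rw [comm_d (fun k => α k t) (fun k => β k t) hi] at e3
    rw [comm_sub (fun k => α k t) (fun k => β k t) hi] at e4
    have h1 := F1 i hi
    linear_combination (-(α (i+2) t)) * e3 - e4 + (β (i+2) t * α (i+3) t) * h1
  have F4 : ∀ i, i % 2 = 0 → Db (i+2) = -(β (i+1) t) * (1 - α (i+2) t * β (i+2) t) := by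
    intro i hi
    have e3 := getEq (i+2) (i+2) (fun s => -β (i+2) (s, t.2) * α (i+3) (s, t.2))
      (-(Db (i+2)) * α (i+3) t + -β (i+2) t * Da (i+3))
      (fun s => L1_e0b (fun k => α k (s, t.2)) (fun k => β k (s, t.2)) hi)
      (((HB (i+2)).neg).mul (HA (i+3)))
    have e5 := getEq (i+3) (i+2)
      (fun s => (1 - α (i+3) (s, t.2) * β (i+3) (s, t.2)) * β (i+2) (s, t.2))
      (-(Da (i+3) * β (i+3) t + α (i+3) t * Db (i+3)) * β (i+2) t
        + (1 - α (i+3) t * β (i+3) t) * Db (i+2))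
      (fun s => L1_om1 (fun k => α k (s, t.2)) (fun k => β k (s, t.2)) hi)
      ((((HA (i+3)).mul (HB (i+3))).const_sub 1).mul (HB (i+2)))
    rw [comm_d (fun k => α k t) (fun k => β k t) hi] at e3
    rw [comm_sub2 (fun k => α k t) (fun k => β k t) hi] at e5
    have h2 : Db (i+3) = -(β (i+2) t) * (1 - α (i+3) t * β (i+3) t) := F2 (i+2) (by omega)
    linear_combination (-(β (i+3) t)) * e3 + e5 + (α (i+3) t * β (i+2) t) * h2
  have F0 : Da 1 = α 2 t * (1 - α 1 t * β 1 t) := by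
    have e0 := getEq 0 0 (fun s => (-1 : ℂ) * α 1 (s, t.2)) ((-1 : ℂ) * Da 1)
      (fun s => by
        rw [L1_e0 (i := 0) (fun k => α k (s, t.2)) (fun k => β k (s, t.2)) rfl]
        show -β 0 (s, t.2) * α 1 (s, t.2) = _
        rw [hβ0 (s, t.2)])
      (HasDerivAt.const_mul (-1 : ℂ) (HA 1))
    rw [comm_00 (fun k => α k t) (fun k => β k t)] at e0
    have hb := hβ0 t
    linear_combination (-1 : ℂ) * e0 + (α 2 t * (1 - α 1 t * β 1 t)) * hb
  constructor
  · have hval : Da k = α (k + 1) t * (1 - α k t * β k t) := by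
      rcases Nat.mod_two_eq_zero_or_one k with hp | hp
      · obtain ⟨i, hi, rfl⟩ : ∃ i, i % 2 = 0 ∧ k = i + 2 := ⟨k - 2, by omega, by omega⟩
        exact F1 i hi
      · rcases Nat.lt_or_ge k 3 with h3 | h3
        · have hk1 : k = 1 := by omega
          subst hk1; exact F0
        · obtain ⟨i, hi, rfl⟩ : ∃ i, i % 2 = 0 ∧ k = i + 3 := ⟨k - 3, by omega, by omega⟩
          exact F3 i hi
    exact hval ▸ HA k
  · have hval : Db k = -(β (k - 1) t) * (1 - α k t * β k t) := by
      rcases Nat.mod_two_eq_zero_or_one k with hp | hp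
      · obtain ⟨i, hi, rfl⟩ : ∃ i, i % 2 = 0 ∧ k = i + 2 := ⟨k - 2, by omega, by omega⟩
        exact F4 i hi
      · obtain ⟨i, hi, rfl⟩ : ∃ i, i % 2 = 0 ∧ k = i + 1 := ⟨k - 1, by omega, by omega⟩
        exact F2 i hi
    exact hval ▸ HB k
end
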